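/- arXiv:2210.14454 — 4 statements merged into one kernel-verified Lean document; each statement's English description precedes it below -/
import Mathlib

section
/- Let ψ be a Borel probability measure on (0,∞) with tilted mean F(λ) = ∫ s e^{λs} ψ(ds)/∫ e^{λs} ψ(ds) and suppose ∫ e^{ζτ} ψ(dτ) = ∞ where ζ = sup{λ : ∫ e^{λτ} ψ(dτ) < ∞}. Then lim_{λ→ζ} F(λ) = M, where M = inf{c ≥ 0 : ψ((c,∞)) = 0} ∈ [0,∞] is the essential supremum of ψ. -/
open MeasureTheory Filter ProbabilityTheory Set Real
open scoped ENNReal Topology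

/-!
Write `T(l) = ∫ e^{ls} dψ` and `N(l) = ∫ s e^{ls} dψ`, so that `F = N / T`. If `ψ((d, ∞)) = 0`
then `N ≤ d T`, hence `F ≤ d`. Conversely, for `0 ≤ c < c' < M` the pointwise inequality
`c e^{ls} - c e^{lc} ≤ s e^{ls}` (valid for `s > 0`, `l ≥ 0`) gives `F(l) ≥ c - c e^{lc} / T(l)`,
and `e^{lc} / T(l) → 0` as `l → ζ⁻`: for finite `ζ` because the blow-up hypothesis forces
`T(l) → ∞`, and for `ζ = ∞` because `T(l) ≥ e^{lc'} ψ((c', ∞))` with `ψ((c', ∞)) > 0`.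
Since `T ≤ 1` on `l ≤ 0`, the blow-up also places `l` in `(0, ζ)` eventually.
-/

section Abscissa

variable {ζ : EReal}

lemma eventually_coe_lt_comap_nhdsLT :
    ∀ᶠ l : ℝ in comap (fun l : ℝ => (l : EReal)) (𝓝[<] ζ), (l : EReal) < ζ :=
  eventually_comap.2 <| eventually_nhdsWithin_of_forall fun _ hx _ h => h ▸ hx

lemma eventually_gt_comap_nhdsLT {b : ℝ} (hb : (b : EReal) < ζ) :
    ∀ᶠ l : ℝ in comap (fun l : ℝ => (l : EReal)) (𝓝[<] ζ), b < l :=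
  eventually_comap.2 <| (eventually_nhdsWithin_of_eventually_nhds (lt_mem_nhds hb)).mono
    fun _ hx _ h => EReal.coe_lt_coe_iff.1 (h ▸ hx)

lemma tendsto_id_comap_coe_nhdsLT_top :
    Tendsto id (comap (fun l : ℝ => (l : EReal)) (𝓝[<] (⊤ : EReal))) atTop :=
  tendsto_atTop.2 fun b => (eventually_gt_comap_nhdsLT (EReal.coe_lt_top b)).mono fun _ h => h.le

end Abscissa

lemma le_exp_mul_div {δ : ℝ} (hδ : 0 < δ) (s : ℝ) : s ≤ exp (δ * s) / δ := by
  rw [le_div_iff₀ hδ]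
  linarith [add_one_le_exp (δ * s)]

section TiltedMoments

variable {ψ : Measure ℝ} {ζ : EReal}

lemma integrable_exp_mul_of_le (hpos : ∀ᵐ s ∂ψ, 0 < s) {t l : ℝ}
    (hl : Integrable (fun s => exp (l * s)) ψ) (htl : t ≤ l) :
    Integrable (fun s => exp (t * s)) ψ :=
  hl.mono' (by fun_prop) <| hpos.mono fun s hs => by
    rw [norm_of_nonneg (exp_pos _).le]
    gcongr

lemma integrable_mul_exp_mul_of_lt (hpos : ∀ᵐ s ∂ψ, 0 < s) {t l : ℝ}
    (hl : Integrable (fun s => exp (l * s)) ψ) (htl : t < l) :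
    Integrable (fun s => s * exp (t * s)) ψ := by
  refine (hl.const_mul (l - t)⁻¹).mono' (by fun_prop) <| hpos.mono fun s hs => ?_
  have hδ : 0 < l - t := sub_pos.2 htl
  rw [norm_of_nonneg (by positivity)]
  calc s * exp (t * s) ≤ exp ((l - t) * s) / (l - t) * exp (t * s) := by
        gcongr; exact le_exp_mul_div hδ s
    _ = (l - t)⁻¹ * exp (l * s) := by
        rw [div_eq_inv_mul, mul_assoc, ← exp_add]; ring_nf

lemma integrable_exp_mul_of_coe_lt_sSup (hpos : ∀ᵐ s ∂ψ, 0 < s) {l : ℝ}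
    (hl : (l : EReal) < sSup ((fun l : ℝ => (l : EReal)) ''
      {l : ℝ | ∫⁻ s, ENNReal.ofReal (exp (l * s)) ∂ψ < ⊤})) :
    Integrable (fun s => exp (l * s)) ψ := by
  obtain ⟨_, ⟨l', hl', rfl⟩, hll'⟩ := lt_sSup_iff.1 hl
  refine integrable_exp_mul_of_le hpos ?_ (EReal.coe_lt_coe_iff.1 hll').le
  exact (lintegral_ofReal_ne_top_iff_integrable (by fun_prop)
    (ae_of_all _ fun _ => (exp_pos _).le)).1 hl'.ne

lemma integrable_mul_exp_mul_of_coe_lt (hpos : ∀ᵐ s ∂ψ, 0 < s)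
    (hint : ∀ l : ℝ, (l : EReal) < ζ → Integrable (fun s => exp (l * s)) ψ)
    {l : ℝ} (hl : (l : EReal) < ζ) : Integrable (fun s => s * exp (l * s)) ψ := by
  obtain ⟨l', hll', hl'⟩ := EReal.exists_between_coe_real hl
  exact integrable_mul_exp_mul_of_lt hpos (hint l' hl') (EReal.coe_lt_coe_iff.1 hll')

lemma lintegral_exp_mul_mono (hpos : ∀ᵐ s ∂ψ, 0 < s) :
    Monotone fun l : ℝ => ∫⁻ s, ENNReal.ofReal (exp (l * s)) ∂ψ :=
  fun _ _ h => lintegral_mono_ae <| hpos.mono fun s hs => by gcongr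

lemma tendsto_mgf_atTop (hpos : ∀ᵐ s ∂ψ, 0 < s)
    (hint : ∀ l : ℝ, (l : EReal) < ζ → Integrable (fun s => exp (l * s)) ψ)
    (hblow : (⨆ (l : ℝ) (_ : (l : EReal) < ζ), ∫⁻ s, ENNReal.ofReal (exp (l * s)) ∂ψ) = ⊤) :
    Tendsto (mgf id ψ) (comap (fun l : ℝ => (l : EReal)) (𝓝[<] ζ)) atTop := by
  refine tendsto_atTop.2 fun A => ?_
  obtain ⟨l₀, hA⟩ := lt_iSup_iff.1 (hblow ▸ ENNReal.ofReal_lt_top (r := A))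
  obtain ⟨hl₀, hA⟩ := lt_iSup_iff.1 hA
  filter_upwards [eventually_coe_lt_comap_nhdsLT, eventually_gt_comap_nhdsLT hl₀] with l hl hl₀l
  have hΘ : ENNReal.ofReal (mgf id ψ l) = ∫⁻ s, ENNReal.ofReal (exp (l * s)) ∂ψ :=
    ofReal_integral_eq_lintegral_ofReal (hint l hl) (ae_of_all _ fun _ => (exp_pos _).le)
  have := hA.trans_le ((lintegral_exp_mul_mono hpos hl₀l.le).trans_eq hΘ.symm)
  exact ((ENNReal.ofReal_lt_ofReal_iff'.1 this).1).le

lemma mgf_id_le_one_of_nonpos [IsProbabilityMeasure ψ] (hpos : ∀ᵐ s ∂ψ, 0 < s) {l : ℝ}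
    (hl : l ≤ 0) : mgf id ψ l ≤ 1 := by
  calc mgf id ψ l ≤ ∫ _, (1 : ℝ) ∂ψ :=
        integral_mono_of_nonneg (ae_of_all _ fun _ => (exp_pos _).le) (integrable_const _)
          (hpos.mono fun s hs => exp_le_one_iff.2 (mul_nonpos_of_nonpos_of_nonneg hl hs.le))
    _ = 1 := by simp

lemma eventually_pos_of_tendsto_mgf [IsProbabilityMeasure ψ] (hpos : ∀ᵐ s ∂ψ, 0 < s)
    {L : Filter ℝ} (hT : Tendsto (mgf id ψ) L atTop) : ∀ᶠ l in L, 0 < l :=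
  (hT.eventually_gt_atTop 1).mono fun _ hl =>
    not_le.1 fun h => (mgf_id_le_one_of_nonpos hpos h).not_gt hl

lemma exp_mul_mul_measureReal_Ioi_le_mgf {c l : ℝ} (hl : 0 ≤ l)
    (hint : Integrable (fun s => exp (l * s)) ψ) :
    exp (l * c) * ψ.real (Ioi c) ≤ mgf id ψ l := by
  calc exp (l * c) * ψ.real (Ioi c) = ∫ s, (Ioi c).indicator (fun _ => exp (l * c)) s ∂ψ := by
        rw [integral_indicator_const _ measurableSet_Ioi, smul_eq_mul, mul_comm]
    _ ≤ mgf id ψ l := by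
        refine integral_mono_of_nonneg (ae_of_all _ fun _ => ?_) hint (ae_of_all _ fun s => ?_)
        · exact indicator_nonneg (fun _ _ => (exp_pos _).le) _
        · by_cases hs : s ∈ Ioi c
          · rw [indicator_of_mem hs]
            exact exp_le_exp.2 (mul_le_mul_of_nonneg_left (mem_Ioi.1 hs).le hl)
          · rw [indicator_of_notMem hs]; exact (exp_pos _).le

lemma mul_mgf_sub_le_integral_mul_exp [IsProbabilityMeasure ψ] (hpos : ∀ᵐ s ∂ψ, 0 < s)
    {c l : ℝ} (hc : 0 ≤ c) (hl : 0 ≤ l) (hint : Integrable (fun s => exp (l * s)) ψ)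
    (hint' : Integrable (fun s => s * exp (l * s)) ψ) :
    c * mgf id ψ l - c * exp (l * c) ≤ ∫ s, s * exp (l * s) ∂ψ := by
  have hpt : ∀ s, 0 < s → c * exp (l * s) - c * exp (l * c) ≤ s * exp (l * s) := by
    intro s hs
    rcases le_total s c with hsc | hcs
    · have : exp (l * s) ≤ exp (l * c) := by gcongr
      nlinarith [exp_pos (l * s), exp_pos (l * c)]
    · nlinarith [exp_pos (l * s), exp_pos (l * c)]
  calc c * mgf id ψ l - c * exp (l * c) = ∫ s, (c * exp (l * s) - c * exp (l * c)) ∂ψ := by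
        rw [integral_sub (hint.const_mul c) (integrable_const _), integral_const_mul]
        simp [mgf]
    _ ≤ ∫ s, s * exp (l * s) ∂ψ :=
        integral_mono_ae ((hint.const_mul c).sub (integrable_const _)) hint' <|
          hpos.mono hpt

lemma integral_mul_exp_div_mgf_le {m l : ℝ} (hm : 0 ≤ m) (hψm : ψ (Ioi m) = 0)
    (hint : Integrable (fun s => exp (l * s)) ψ)
    (hint' : Integrable (fun s => s * exp (l * s)) ψ) :
    (∫ s, s * exp (l * s) ∂ψ) / mgf id ψ l ≤ m := by
  refine div_le_of_le_mul₀ mgf_nonneg hm ?_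
  rw [mgf, ← integral_const_mul]
  refine integral_mono_ae hint' (hint.const_mul m) ?_
  filter_upwards [measure_eq_zero_iff_ae_notMem.1 hψm] with s hs
  exact mul_le_mul_of_nonneg_right (not_lt.1 hs) (exp_pos _).le

lemma tendsto_exp_mul_div_mgf [IsProbabilityMeasure ψ] (hpos : ∀ᵐ s ∂ψ, 0 < s)
    (hint : ∀ l : ℝ, (l : EReal) < ζ → Integrable (fun s => exp (l * s)) ψ)
    (hT : Tendsto (mgf id ψ) (comap (fun l : ℝ => (l : EReal)) (𝓝[<] ζ)) atTop)
    {c c' : ℝ} (hc : 0 ≤ c) (hcc' : c < c') (hc' : ψ (Ioi c') ≠ 0) :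
    Tendsto (fun l => exp (l * c) / mgf id ψ l)
      (comap (fun l : ℝ => (l : EReal)) (𝓝[<] ζ)) (𝓝 0) := by
  induction ζ using EReal.rec with
  | bot => simp
  | coe z =>
    -- finite abscissa: the numerator stays bounded while the mgf blows up
    refine squeeze_zero' (Eventually.of_forall fun l => div_nonneg (exp_pos _).le mgf_nonneg)
      ?_ ((tendsto_const_nhds (x := exp (z * c))).div_atTop hT)
    filter_upwards [eventually_coe_lt_comap_nhdsLT] with l hl
    exact div_le_div_of_nonneg_right
      (exp_le_exp.2 (mul_le_mul_of_nonneg_right (EReal.coe_le_coe_iff.1 hl.le) hc)) mgf_nonneg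
  | top =>
    -- infinite abscissa: the mass beyond `c'` makes the mgf grow faster than `exp (l * c)`
    have hp : 0 < ψ.real (Ioi c') := ENNReal.toReal_pos hc' (measure_ne_top _ _)
    have hdecay : Tendsto (fun l : ℝ => exp (l * (c - c')) / ψ.real (Ioi c'))
        (comap (fun l : ℝ => (l : EReal)) (𝓝[<] ⊤)) (𝓝 0) := by
      have hlin := tendsto_id_comap_coe_nhdsLT_top.atTop_mul_const_of_neg (sub_neg.2 hcc')
      simpa using (tendsto_exp_atBot.comp hlin).div_const (ψ.real (Ioi c'))
    refine squeeze_zero' (Eventually.of_forall fun l => div_nonneg (exp_pos _).le mgf_nonneg)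
      ?_ hdecay
    filter_upwards [eventually_coe_lt_comap_nhdsLT, eventually_pos_of_tendsto_mgf hpos hT]
      with l hl hl0
    calc exp (l * c) / mgf id ψ l ≤ exp (l * c) / (exp (l * c') * ψ.real (Ioi c')) := by
          gcongr
          exact exp_mul_mul_measureReal_Ioi_le_mgf hl0.le (hint l hl)
      _ = exp (l * (c - c')) / ψ.real (Ioi c') := by
          rw [mul_sub, exp_sub, div_div]

lemma eventually_lt_integral_mul_exp_div_mgf [IsProbabilityMeasure ψ] (hpos : ∀ᵐ s ∂ψ, 0 < s)
    (hint : ∀ l : ℝ, (l : EReal) < ζ → Integrable (fun s => exp (l * s)) ψ)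
    (hT : Tendsto (mgf id ψ) (comap (fun l : ℝ => (l : EReal)) (𝓝[<] ζ)) atTop)
    {b c' : ℝ} (hb : 0 ≤ b) (hbc' : b < c') (hc' : ψ (Ioi c') ≠ 0) :
    ∀ᶠ l in comap (fun l : ℝ => (l : EReal)) (𝓝[<] ζ),
      b < (∫ s, s * exp (l * s) ∂ψ) / mgf id ψ l := by
  obtain ⟨c, hbc, hcc'⟩ := exists_between hbc'
  have hc : 0 ≤ c := hb.trans hbc.le
  have hlim : Tendsto (fun l => c - c * (exp (l * c) / mgf id ψ l))
      (comap (fun l : ℝ => (l : EReal)) (𝓝[<] ζ)) (𝓝 c) := by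
    simpa using tendsto_const_nhds.sub
      ((tendsto_exp_mul_div_mgf hpos hint hT hc hcc' hc').const_mul c)
  filter_upwards [hlim.eventually (eventually_gt_nhds hbc), eventually_coe_lt_comap_nhdsLT,
    eventually_pos_of_tendsto_mgf hpos hT] with l hbl hl hl0
  have hTl : mgf id ψ l ≠ 0 := (mgf_pos (hint l hl)).ne'
  calc b < c - c * (exp (l * c) / mgf id ψ l) := hbl
    _ = (c * mgf id ψ l - c * exp (l * c)) / mgf id ψ l := by field_simp
    _ ≤ (∫ s, s * exp (l * s) ∂ψ) / mgf id ψ l :=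
        div_le_div_of_nonneg_right (mul_mgf_sub_le_integral_mul_exp hpos hc hl0.le (hint l hl)
          (integrable_mul_exp_mul_of_coe_lt hpos hint hl)) mgf_nonneg

end TiltedMoments

/-- For a probability measure `ψ` on `(0,∞)` whose MGF blows up at the
abscissa `ζ = sup{λ : ∫ e^{λτ} ψ(dτ) < ∞}` (formulated as `⨆_{λ<ζ} ∫ e^{λτ} ψ = ∞`),
the tilted mean `F(λ) = ∫ s e^{λ s} ψ(ds) / ∫ e^{λ s} ψ(ds)` tends, as `λ → ζ` from
the left, to the essential supremum `M = inf{c ≥ 0 : ψ((c,∞)) = 0} ∈ [0,∞]` of `ψ`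
(with `M = ∞` when the defining set is empty); both `ζ` and `M` are extended reals. -/
theorem stmt_8 (ψ : Measure ℝ) [IsProbabilityMeasure ψ] (hψ : ψ (Set.Ioi 0)ᶜ = 0)
    (Θ : ℝ → ℝ≥0∞)
    (hΘ : ∀ l : ℝ, Θ l = ∫⁻ s, ENNReal.ofReal (Real.exp (l * s)) ∂ψ)
    (ζ : EReal)
    (hζ : ζ = sSup ((fun l : ℝ => (l : EReal)) '' {l : ℝ | Θ l < ⊤}))
    (hblow : (⨆ (l : ℝ) (_ : (l : EReal) < ζ), Θ l) = ⊤)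
    (F : ℝ → ℝ)
    (hF : ∀ l : ℝ, F l = (∫ s, s * Real.exp (l * s) ∂ψ) / ∫ s, Real.exp (l * s) ∂ψ)
    (M : EReal)
    (hM : M = sInf ((fun c : ℝ => (c : EReal)) '' {c : ℝ | 0 ≤ c ∧ ψ (Set.Ioi c) = 0})) :
    Tendsto (fun l : ℝ => (F l : EReal))
      (comap (fun l : ℝ => (l : EReal)) (nhdsWithin ζ (Set.Iio ζ))) (nhds M) := by
  have hpos : ∀ᵐ s ∂ψ, 0 < s :=
    (measure_eq_zero_iff_ae_notMem.1 hψ).mono fun s hs => by simpa using hs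
  obtain rfl : Θ = fun l => ∫⁻ s, ENNReal.ofReal (exp (l * s)) ∂ψ := funext hΘ
  have hint : ∀ l : ℝ, (l : EReal) < ζ → Integrable (fun s => exp (l * s)) ψ :=
    fun l hl => integrable_exp_mul_of_coe_lt_sSup hpos (hζ ▸ hl)
  have hT := tendsto_mgf_atTop hpos hint hblow
  have hF_nonneg : ∀ l, 0 ≤ F l := fun l => (hF l).symm ▸
    div_nonneg (integral_nonneg_of_ae (hpos.mono fun s hs => by positivity)) mgf_nonneg
  subst hM
  refine tendsto_order.2 ⟨fun a ha => ?_, fun a ha => ?_⟩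
  · obtain ⟨b, hab, hbM⟩ := EReal.exists_between_coe_real ha
    rcases lt_or_ge b 0 with hb | hb
    · exact Eventually.of_forall fun l =>
        hab.trans (EReal.coe_lt_coe_iff.2 (hb.trans_le (hF_nonneg l)))
    obtain ⟨c', hbc', hc'M⟩ := EReal.exists_between_coe_real hbM
    have hc' : ψ (Ioi c') ≠ 0 := fun h =>
      hc'M.not_ge (sInf_le ⟨c', ⟨hb.trans (EReal.coe_lt_coe_iff.1 hbc').le, h⟩, rfl⟩)
    filter_upwards [eventually_lt_integral_mul_exp_div_mgf hpos hint hT hb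
      (EReal.coe_lt_coe_iff.1 hbc') hc'] with l hl
    exact hab.trans (EReal.coe_lt_coe_iff.2 ((hF l).symm ▸ hl))
  · obtain ⟨_, ⟨d, ⟨hd, hψd⟩, rfl⟩, hda⟩ := sInf_lt_iff.1 ha
    filter_upwards [eventually_coe_lt_comap_nhdsLT] with l hl
    refine lt_of_le_of_lt (EReal.coe_le_coe_iff.2 ?_) hda
    rw [hF l]
    exact integral_mul_exp_div_mgf_le hd hψd (hint l hl)
      (integrable_mul_exp_mul_of_coe_lt hpos hint hl)
end

section
/- Let μ and ν be probability measures on a Polish space X. Then the relative entropy admits the variational representation H(μ|ν) = sup{⟨μ, φ⟩ : φ ∈ C_b(X), ⟨ν, e^φ⟩ = 1}, where H(μ|ν) = ∫ log(dμ/dν) dμ if μ ≪ ν and ∞ otherwise. -/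
/-!
Young's inequality `t a ≤ (t log t + 1 - t) + (eᵃ - 1)`, applied to `t = dμ/dν` and `a = φ x` and
integrated against `ν`, bounds every admissible `⟨μ, φ⟩` by the relative entropy.

For the converse it suffices to make the Donsker–Varadhan functional `∫ ψ dμ - log ∫ e^ψ dν` large,
because subtracting `log ∫ e^ψ dν` from a bounded continuous `ψ` yields an admissible test function
with the same value. By `log y ≤ y - 1` the functional dominates `∫ (f ψ + 1 - e^ψ) dν`,
`f = dμ/dν`. Taking for `ψ` the logarithm of `f` truncated to `[1/(n+1), n+1]` makes this integrand
nonnegative and convergent to `f log f + 1 - f`, so Fatou's lemma recovers the entropy. If `μ` is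
not absolutely continuous, large multiples of the indicator of a `ν`-null set charged by `μ` make
the functional unbounded. Finally, bounded measurable `ψ` are replaced by bounded continuous ones:
density in `L¹(μ + ν)` gives a.e. convergent approximants, which, clamped to the bound of `ψ`, make
the functional converge by dominated convergence.
-/

open scoped Classical
open MeasureTheory Filter BoundedContinuousFunction
open scoped ENNReal
open InformationTheory

lemma mul_le_klFun_add_exp_sub_one {t : ℝ} (ht : 0 ≤ t) (a : ℝ) :
    t * a ≤ klFun t + (Real.exp a - 1) := by
  rw [klFun_apply]
  rcases ht.eq_or_lt with rfl | ht
  · simpa using (Real.exp_pos a).le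
  · have h := Real.add_one_le_exp (a - Real.log t)
    rw [Real.exp_sub, Real.exp_log ht, le_div_iff₀ ht] at h
    linarith

lemma mul_log_add_one_sub_nonneg {t s : ℝ} (ht : 0 ≤ t) (hs : s ∈ Set.uIcc t 1) :
    0 ≤ t * Real.log s + 1 - s := by
  have hs0 : 0 ≤ s := le_trans (le_min ht zero_le_one) hs.1
  have hcross : 0 ≤ (t - s) * Real.log s := by
    rcases Set.mem_uIcc.1 hs with ⟨hts, hs1⟩ | ⟨hs1, hst⟩
    · exact mul_nonneg_of_nonpos_of_nonpos (by linarith) (Real.log_nonpos hs0 hs1)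
    · exact mul_nonneg (by linarith) (Real.log_nonneg hs1)
  have hkl := klFun_nonneg hs0
  rw [klFun_apply] at hkl
  -- `t log s + 1 - s = klFun s + (t - s) log s`
  nlinarith

lemma abs_max_min_le_abs (t M : ℝ) : |max (min t M) (-M)| ≤ |M| :=
  abs_le.2 ⟨(neg_le_neg (le_abs_self M)).trans (le_max_right _ _),
    max_le ((min_le_right _ _).trans (le_abs_self M)) (neg_le_abs M)⟩

lemma norm_exp_le_exp_of_abs_le {a M : ℝ} (h : |a| ≤ M) : ‖Real.exp a‖ ≤ Real.exp M := by
  rw [Real.norm_eq_abs, abs_of_pos (Real.exp_pos a)]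
  exact Real.exp_le_exp.2 (le_of_abs_le h)

section Clip

noncomputable def clip (n : ℕ) (t : ℝ) : ℝ := max (min t (n + 1)) (n + 1 : ℝ)⁻¹

variable (n : ℕ) (t : ℝ)

lemma inv_le_clip : (n + 1 : ℝ)⁻¹ ≤ clip n t := le_max_right _ _

lemma clip_le : clip n t ≤ n + 1 := by
  have h1 : (1 : ℝ) ≤ n + 1 := le_add_of_nonneg_left n.cast_nonneg
  exact max_le (min_le_right _ _) ((inv_le_one_of_one_le₀ h1).trans h1)

lemma clip_pos : 0 < clip n t := lt_of_lt_of_le (by positivity) (inv_le_clip n t)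

lemma continuous_clip : Continuous (clip n) := by unfold clip; fun_prop

lemma abs_log_clip_le : |Real.log (clip n t)| ≤ Real.log (n + 1) := by
  rw [abs_le, ← Real.log_inv]
  exact ⟨Real.log_le_log (by positivity) (inv_le_clip n t),
    Real.log_le_log (clip_pos n t) (clip_le n t)⟩

lemma clip_mem_uIcc : clip n t ∈ Set.uIcc t 1 := by
  have h1 : (1 : ℝ) ≤ n + 1 := le_add_of_nonneg_left n.cast_nonneg
  have hinv : (n + 1 : ℝ)⁻¹ ≤ 1 := inv_le_one_of_one_le₀ h1
  rw [Set.mem_uIcc, clip]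
  rcases le_total t (n + 1) with htn | htn
  · rw [min_eq_left htn]
    rcases le_total t 1 with ht1 | ht1
    · exact Or.inl ⟨le_max_left _ _, max_le ht1 hinv⟩
    · rw [max_eq_left (hinv.trans ht1)]
      exact Or.inr ⟨ht1, le_rfl⟩
  · rw [min_eq_right htn, max_eq_left (hinv.trans h1)]
    exact Or.inr ⟨h1, htn⟩

lemma tendsto_clip : Tendsto (fun n => clip n t) atTop (nhds (max t 0)) := by
  have hmin : ∀ᶠ n : ℕ in atTop, min t (n + 1) = t := by
    filter_upwards [(tendsto_natCast_atTop_atTop (R := ℝ)).eventually_ge_atTop t] with n hn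
    exact min_eq_left (by linarith)
  have hinv : Tendsto (fun n : ℕ => ((n : ℝ) + 1)⁻¹) atTop (nhds 0) := by
    simpa [one_div] using tendsto_one_div_add_atTop_nhds_zero_nat (𝕜 := ℝ)
  refine (tendsto_const_nhds.max hinv).congr' ?_
  filter_upwards [hmin] with n hn
  simp only [clip, hn]

variable {t}

lemma tendsto_mul_log_clip (ht : 0 ≤ t) :
    Tendsto (fun n => t * Real.log (clip n t) + 1 - clip n t) atTop (nhds (klFun t)) := by
  have hclip : Tendsto (fun n => clip n t) atTop (nhds t) := by
    simpa [max_eq_left ht] using tendsto_clip t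
  rw [klFun_apply]
  rcases ht.eq_or_lt with rfl | ht
  · simpa using (tendsto_const_nhds (x := (1 : ℝ))).sub hclip
  · exact ((tendsto_const_nhds.mul
      ((Real.continuousAt_log ht.ne').tendsto.comp hclip)).add_const 1).sub hclip

end Clip

noncomputable def dvFunctional {X : Type*} [MeasurableSpace X] (μ ν : Measure X) (ψ : X → ℝ) :
    ℝ :=
  ∫ x, ψ x ∂μ - Real.log (∫ x, Real.exp (ψ x) ∂ν)

section Measurable

variable {X : Type*} [MeasurableSpace X]

lemma integrable_of_abs_le (ρ : Measure X) [IsFiniteMeasure ρ] {ψ : X → ℝ} (hψ : Measurable ψ)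
    {M : ℝ} (hM : ∀ x, |ψ x| ≤ M) : Integrable ψ ρ :=
  .of_bound hψ.aestronglyMeasurable M (ae_of_all _ hM)

lemma integrable_exp_of_abs_le (ρ : Measure X) [IsFiniteMeasure ρ] {ψ : X → ℝ}
    (hψ : Measurable ψ) {M : ℝ} (hM : ∀ x, |ψ x| ≤ M) :
    Integrable (fun x => Real.exp (ψ x)) ρ :=
  .of_bound (Real.measurable_exp.comp hψ).aestronglyMeasurable (Real.exp M)
    (ae_of_all _ fun x => norm_exp_le_exp_of_abs_le (hM x))

lemma ofReal_integral_le_klDiv {μ ν : Measure X} [IsFiniteMeasure μ] [IsProbabilityMeasure ν]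
    {φ : X → ℝ} (hφ : Integrable φ μ) (hexp : ∫ x, Real.exp (φ x) ∂ν = 1) :
    ENNReal.ofReal (∫ x, φ x ∂μ) ≤ klDiv μ ν := by
  by_cases h : μ ≪ ν ∧ Integrable (llr μ ν) μ
  swap
  · simp [klDiv_eq_integral_klFun, h]
  rw [klDiv_eq_integral_klFun, if_pos h]
  refine ENNReal.ofReal_le_ofReal ?_
  set f := fun x => (μ.rnDeriv ν x).toReal
  have hfφ : Integrable (fun x => f x * φ x) ν := (integrable_rnDeriv_smul_iff h.1).2 hφ
  have hkl : Integrable (fun x => klFun (f x)) ν := (integrable_klFun_rnDeriv_iff h.1).2 h.2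
  have hexp_int : Integrable (fun x => Real.exp (φ x)) ν :=
    .of_integral_ne_zero (hexp ▸ one_ne_zero)
  have hexp_sub : Integrable (fun x => Real.exp (φ x) - 1) ν := hexp_int.sub (integrable_const 1)
  calc ∫ x, φ x ∂μ = ∫ x, f x * φ x ∂ν := (integral_rnDeriv_smul h.1).symm
    _ ≤ ∫ x, klFun (f x) + (Real.exp (φ x) - 1) ∂ν :=
      integral_mono hfφ (hkl.add hexp_sub) fun x =>
        mul_le_klFun_add_exp_sub_one ENNReal.toReal_nonneg (φ x)
    _ = ∫ x, klFun (f x) ∂ν := by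
      rw [integral_add hkl hexp_sub, integral_sub hexp_int (integrable_const 1), hexp]
      simp

lemma tendsto_dvFunctional {μ ν : Measure X} [IsFiniteMeasure μ] [IsFiniteMeasure ν] [NeZero ν]
    {ψ : ℕ → X → ℝ} {g : X → ℝ} {M : ℝ} (hψ : ∀ n, Measurable (ψ n))
    (hψM : ∀ n x, |ψ n x| ≤ M) (hg : Measurable g) (hgM : ∀ x, |g x| ≤ M)
    (hμ : ∀ᵐ x ∂μ, Tendsto (fun n => ψ n x) atTop (nhds (g x)))
    (hν : ∀ᵐ x ∂ν, Tendsto (fun n => ψ n x) atTop (nhds (g x))) :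
    Tendsto (fun n => dvFunctional μ ν (ψ n)) atTop (nhds (dvFunctional μ ν g)) := by
  have hint : Tendsto (fun n => ∫ x, ψ n x ∂μ) atTop (nhds (∫ x, g x ∂μ)) :=
    tendsto_integral_of_dominated_convergence (fun _ => M) (fun n => (hψ n).aestronglyMeasurable)
      (integrable_const M) (fun n => ae_of_all _ (hψM n)) hμ
  have hexp : Tendsto (fun n => ∫ x, Real.exp (ψ n x) ∂ν) atTop
      (nhds (∫ x, Real.exp (g x) ∂ν)) :=
    tendsto_integral_of_dominated_convergence (fun _ => Real.exp M)
      (fun n => (Real.measurable_exp.comp (hψ n)).aestronglyMeasurable) (integrable_const _)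
      (fun n => ae_of_all _ fun x => norm_exp_le_exp_of_abs_le (hψM n x))
      (hν.mono fun x hx => (Real.continuous_exp.tendsto _).comp hx)
  exact hint.sub (hexp.log (integral_exp_pos (integrable_exp_of_abs_le ν hg hgM)).ne')

end Measurable

section LowerBound

variable {X : Type*} [MeasurableSpace X] {μ ν : Measure X} [IsFiniteMeasure μ]
  [IsProbabilityMeasure ν]

lemma integral_rnDeriv_mul_add_one_sub_exp_le_dvFunctional (hac : μ ≪ ν) {ψ : X → ℝ}
    (hψ : Integrable ψ μ) (hexp : Integrable (fun x => Real.exp (ψ x)) ν) :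
    ∫ x, (μ.rnDeriv ν x).toReal * ψ x + 1 - Real.exp (ψ x) ∂ν ≤ dvFunctional μ ν ψ := by
  have hfψ : Integrable (fun x => (μ.rnDeriv ν x).toReal * ψ x) ν :=
    (integrable_rnDeriv_smul_iff hac).2 hψ
  have hfψ1 : Integrable (fun x => (μ.rnDeriv ν x).toReal * ψ x + 1) ν :=
    hfψ.add (integrable_const 1)
  rw [integral_sub hfψ1 hexp, integral_add hfψ (integrable_const 1)]
  have hchange : ∫ x, (μ.rnDeriv ν x).toReal * ψ x ∂ν = ∫ x, ψ x ∂μ := integral_rnDeriv_smul hac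
  have hlog := Real.log_le_sub_one_of_pos (integral_exp_pos hexp)
  simp only [dvFunctional, hchange, integral_const, probReal_univ, one_smul]
  linarith

lemma exists_lt_dvFunctional_of_lt_lintegral_klFun (hac : μ ≪ ν) {r : ℝ}
    (hr : ENNReal.ofReal r < ∫⁻ x, ENNReal.ofReal (klFun (μ.rnDeriv ν x).toReal) ∂ν) :
    ∃ ψ : X → ℝ, Measurable ψ ∧ (∃ M, ∀ x, |ψ x| ≤ M) ∧ r < dvFunctional μ ν ψ := by
  set f := fun x => (μ.rnDeriv ν x).toReal
  have hf : Measurable f := (μ.measurable_rnDeriv ν).ennreal_toReal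
  set ψ := fun (n : ℕ) x => Real.log (clip n (f x))
  have hψ : ∀ n, Measurable (ψ n) := fun n =>
    Real.measurable_log.comp ((continuous_clip n).measurable.comp hf)
  have hψM : ∀ n x, |ψ n x| ≤ Real.log (n + 1) := fun n x => abs_log_clip_le n (f x)
  have hexpψ : ∀ n x, Real.exp (ψ n x) = clip n (f x) := fun n x =>
    Real.exp_log (clip_pos n (f x))
  set G := fun (n : ℕ) x => f x * ψ n x + 1 - Real.exp (ψ n x)
  have hG0 : ∀ n x, 0 ≤ G n x := fun n x => by
    simpa only [G, hexpψ] using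
      mul_log_add_one_sub_nonneg ENNReal.toReal_nonneg (clip_mem_uIcc n (f x))
  have hGlim : ∀ x, Tendsto (fun n => ENNReal.ofReal (G n x)) atTop
      (nhds (ENNReal.ofReal (klFun (f x)))) := fun x => by
    refine (ENNReal.continuous_ofReal.tendsto _).comp ?_
    simp only [G, hexpψ]
    exact tendsto_mul_log_clip ENNReal.toReal_nonneg
  have hfatou : ∫⁻ x, ENNReal.ofReal (klFun (f x)) ∂ν ≤
      liminf (fun n => ∫⁻ x, ENNReal.ofReal (G n x) ∂ν) atTop := by
    simp_rw [← fun x => (hGlim x).liminf_eq]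
    exact lintegral_liminf_le fun n => by fun_prop
  obtain ⟨n, hn⟩ := (eventually_lt_of_lt_liminf (hr.trans_le hfatou)).exists
  have hψμ := integrable_of_abs_le μ (hψ n) (hψM n)
  have hexp := integrable_exp_of_abs_le ν (hψ n) (hψM n)
  have hGint : Integrable (G n) ν :=
    (((integrable_rnDeriv_smul_iff hac).2 hψμ).add (integrable_const 1)).sub hexp
  rw [← ofReal_integral_eq_lintegral_ofReal hGint (ae_of_all _ (hG0 n)),
    ENNReal.ofReal_lt_ofReal_iff'] at hn
  exact ⟨ψ n, hψ n, ⟨_, hψM n⟩,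
    hn.1.trans_le (integral_rnDeriv_mul_add_one_sub_exp_le_dvFunctional hac hψμ hexp)⟩

lemma exists_lt_dvFunctional_of_not_absolutelyContinuous (h : ¬ μ ≪ ν) (r : ℝ) :
    ∃ ψ : X → ℝ, Measurable ψ ∧ (∃ M, ∀ x, |ψ x| ≤ M) ∧ r < dvFunctional μ ν ψ := by
  obtain ⟨A, hA, hνA, hμA⟩ : ∃ A, MeasurableSet A ∧ ν A = 0 ∧ μ A ≠ 0 := by
    by_contra! hcon
    exact h (Measure.AbsolutelyContinuous.mk hcon)
  have hμA_pos : 0 < μ.real A := ENNReal.toReal_pos hμA (measure_ne_top μ A)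
  set c := (|r| + 1) / μ.real A
  have hc : |r| + 1 = c * μ.real A := (div_mul_cancel₀ _ hμA_pos.ne').symm
  refine ⟨A.indicator fun _ => c, measurable_const.indicator hA, ⟨|c|, fun x => ?_⟩, ?_⟩
  · by_cases hx : x ∈ A <;> simp [hx]
  · have hexp : ∫ x, Real.exp (A.indicator (fun _ => c) x) ∂ν = 1 := by
      rw [integral_congr_ae (g := fun _ => (1 : ℝ)), integral_const, probReal_univ, one_smul]
      filter_upwards [measure_eq_zero_iff_ae_notMem.1 hνA] with x hx
      simp [hx]
    rw [dvFunctional, hexp, Real.log_one, sub_zero, integral_indicator_const _ hA, smul_eq_mul,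
      mul_comm, ← hc]
    linarith [le_abs_self r]

lemma exists_lt_dvFunctional_of_lt_klDiv {r : ℝ} (hr : ENNReal.ofReal r < klDiv μ ν) :
    ∃ ψ : X → ℝ, Measurable ψ ∧ (∃ M, ∀ x, |ψ x| ≤ M) ∧ r < dvFunctional μ ν ψ := by
  by_cases hac : μ ≪ ν
  · rw [klDiv_eq_lintegral_klFun_of_ac hac] at hr
    exact exists_lt_dvFunctional_of_lt_lintegral_klFun hac hr
  · exact exists_lt_dvFunctional_of_not_absolutelyContinuous hac r

end LowerBound

section BoundedContinuous

variable {X : Type*} [MeasurableSpace X] [TopologicalSpace X]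

lemma exists_seq_boundedContinuous_tendsto_ae [NormalSpace X] [BorelSpace X] {E : Type*}
    [NormedAddCommGroup E] [NormedSpace ℝ E] [SecondCountableTopology E]
    (ρ : Measure X) [ρ.WeaklyRegular] {g : X → E} (hg : Integrable g ρ) :
    ∃ φ : ℕ → X →ᵇ E, ∀ᵐ x ∂ρ, Tendsto (fun n => φ n x) atTop (nhds (g x)) := by
  choose φ hφ _ using fun n : ℕ =>
    hg.exists_boundedContinuous_lintegral_sub_le (ENNReal.inv_ne_zero.2 (ENNReal.natCast_ne_top n))
  have hL1 : Tendsto (fun n => eLpNorm (⇑(φ n) - g) 1 ρ) atTop (nhds 0) := by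
    refine tendsto_of_tendsto_of_tendsto_of_le_of_le tendsto_const_nhds
      ENNReal.tendsto_inv_nat_nhds_zero (fun _ => bot_le) fun n => ?_
    rw [eLpNorm_one_eq_lintegral_enorm]
    simpa [enorm_sub_rev] using hφ n
  obtain ⟨ns, -, hns⟩ := (tendstoInMeasure_of_tendsto_eLpNorm one_ne_zero
    (fun n => (φ n).continuous.aestronglyMeasurable) hg.aestronglyMeasurable
    hL1).exists_seq_tendsto_ae
  exact ⟨φ ∘ ns, hns⟩

lemma exists_boundedContinuous_lt_dvFunctional [NormalSpace X] [BorelSpace X] {μ ν : Measure X}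
    [IsFiniteMeasure μ] [IsFiniteMeasure ν] [NeZero ν] [(μ + ν).WeaklyRegular] {g : X → ℝ}
    (hg : Measurable g) {M : ℝ} (hgM : ∀ x, |g x| ≤ M) {r : ℝ} (hr : r < dvFunctional μ ν g) :
    ∃ φ : X →ᵇ ℝ, r < dvFunctional μ ν φ := by
  obtain ⟨φ, hφ⟩ := exists_seq_boundedContinuous_tendsto_ae (μ + ν) (integrable_of_abs_le _ hg hgM)
  set ψ := fun n => (φ n ⊓ const X M) ⊔ const X (-M)
  have hψ : ∀ n x, ψ n x = max (min (φ n x) M) (-M) := fun n x => rfl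
  have hgψ : ∀ x, g x = max (min (g x) M) (-M) := fun x => by
    rw [min_eq_left (le_of_abs_le (hgM x)), max_eq_left (neg_le_of_abs_le (hgM x))]
  have hlim : ∀ᵐ x ∂(μ + ν), Tendsto (fun n => ψ n x) atTop (nhds (g x)) := by
    filter_upwards [hφ] with x hx
    simp only [hψ]
    rw [hgψ x]
    exact ((continuous_id.min continuous_const).max continuous_const).tendsto _ |>.comp hx
  rw [ae_add_measure_iff] at hlim
  have hconv := tendsto_dvFunctional (fun n => (ψ n).continuous.measurable)
    (fun n x => by rw [hψ]; exact abs_max_min_le_abs _ _) hg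
    (fun x => (hgM x).trans (le_abs_self M)) hlim.1 hlim.2
  obtain ⟨n, hn⟩ := (hconv.eventually (lt_mem_nhds hr)).exists
  exact ⟨ψ n, hn⟩

lemma exists_integral_exp_eq_one_and_integral_eq_dvFunctional [OpensMeasurableSpace X]
    {μ ν : Measure X} [IsProbabilityMeasure μ] [IsFiniteMeasure ν] [NeZero ν] (φ : X →ᵇ ℝ) :
    ∃ φ' : X →ᵇ ℝ, ∫ x, Real.exp (φ' x) ∂ν = 1 ∧ ∫ x, φ' x ∂μ = dvFunctional μ ν φ := by
  set A := ∫ x, Real.exp (φ x) ∂ν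
  have hA : 0 < A := integral_exp_pos (integrable_exp_of_abs_le ν φ.continuous.measurable
    fun x => (Real.norm_eq_abs _).symm.trans_le (φ.norm_coe_le_norm x))
  refine ⟨φ - const X (Real.log A), ?_, ?_⟩
  · simp only [coe_sub, Pi.sub_apply, const_apply, Real.exp_sub, Real.exp_log hA, integral_div]
    exact div_self hA.ne'
  · simp only [coe_sub, Pi.sub_apply, const_apply]
    rw [integral_sub (φ.integrable μ) (integrable_const _), integral_const, probReal_univ,
      one_smul, dvFunctional]

theorem klDiv_eq_iSup_boundedContinuous [TopologicalSpace.PseudoMetrizableSpace X] [BorelSpace X]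
    (μ ν : Measure X) [IsProbabilityMeasure μ] [IsProbabilityMeasure ν] :
    klDiv μ ν = ⨆ (φ : X →ᵇ ℝ) (_ : ∫ x, Real.exp (φ x) ∂ν = 1), ENNReal.ofReal (∫ x, φ x ∂μ) := by
  refine le_antisymm (ENNReal.le_of_forall_nnreal_lt fun r hr => ?_)
    (iSup₂_le fun φ hφ => ofReal_integral_le_klDiv (φ.integrable μ) hφ)
  rw [← ENNReal.ofReal_coe_nnreal] at hr ⊢
  obtain ⟨g, hg, ⟨M, hgM⟩, hgr⟩ := exists_lt_dvFunctional_of_lt_klDiv hr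
  obtain ⟨φ, hφr⟩ := exists_boundedContinuous_lt_dvFunctional hg hgM hgr
  obtain ⟨φ', hφ'exp, hφ'⟩ :=
    exists_integral_exp_eq_one_and_integral_eq_dvFunctional (μ := μ) (ν := ν) φ
  exact le_iSup₂_of_le φ' hφ'exp (ENNReal.ofReal_le_ofReal (hφ' ▸ hφr.le))

end BoundedContinuous

/-- Donsker–Varadhan variational formula, constrained form.
For probability measures `μ, ν` on a Polish space `X`, the relative entropy
`H(μ|ν)` (equal to `∫ log(dμ/dν) dμ` when `μ ≪ ν` and `∞` otherwise; here expressed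
in `[0,∞]` as `∫ φ(dμ/dν) dν` with `φ(t) = t log t − t + 1 ≥ 0`) satisfies
`H(μ|ν) = sup{⟨μ, φ⟩ : φ ∈ C_b(X), ⟨ν, e^φ⟩ = 1}`. -/
theorem stmt_13 {X : Type*} [MeasurableSpace X] [TopologicalSpace X] [PolishSpace X]
    [BorelSpace X]
    (μ ν : Measure X) [IsProbabilityMeasure μ] [IsProbabilityMeasure ν]
    (H : ℝ≥0∞)
    (hH : H = if μ ≪ ν then
        ∫⁻ x, ENNReal.ofReal
          ((μ.rnDeriv ν x).toReal * Real.log (μ.rnDeriv ν x).toReal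
            - (μ.rnDeriv ν x).toReal + 1) ∂ν
      else ⊤) :
    H = ⨆ (φ : X →ᵇ ℝ) (_ : ∫ x, Real.exp (φ x) ∂ν = 1),
          ENNReal.ofReal (∫ x, φ x ∂μ) := by
  rw [hH, ← klDiv_eq_iSup_boundedContinuous, klDiv_eq_lintegral_klFun]
  simp only [klFun_apply, sub_add_eq_add_sub]
end

section
/- Let a > 0 and let Q be a nonnegative summable function on a countable set with Q_x > 0 for some x, and let ψ_x ∈ P(0,∞) with G_Q(λ) = Σ_x Q_x log ∫ e^{λs} ψ_x(ds) satisfying G_Q(ζ_Q) = ∞. If a = m_Q := Σ_x Q_x m_x (with m_x the essential infimum of ψ_x), then the Fenchel–Legendre transform G_Q*(a) = sup_λ {aλ − G_Q(λ)} equals −Σ_x Q_x log ψ_x({m_x}). -/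
/-!
Write `∫ e^{λs} ψ_x(ds) = e^{λ m_x} J_x(λ)` with `J_x(λ) = ∫ e^{λ(s - m_x)} ψ_x(ds)`. Because
`ψ_x` lives on `[m_x, ∞)`, `J_x` is nondecreasing, `ψ_x({m_x}) ≤ J_x(λ)` for all `λ`, and
`J_x(λ) ≤ 1` for `λ ≤ 0`. Since `a = Σ_x Q_x m_x`, we get
`aλ − G_Q(λ) = Σ_x Q_x (−log J_x(λ))`. The lower bound on `J_x` bounds every term by
`−Q_x log ψ_x({m_x})`; conversely, as `λ → −∞`, `J_x(λ)` decreases to `ψ_x({m_x})` by dominated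
convergence, and monotone convergence of the (nonnegative) series gives the matching lower bound.
-/

open scoped Classical
open MeasureTheory Filter Topology Set
open scoped ENNReal

theorem ENNReal.tsum_iSup_of_monotone {α ι : Type*} [Preorder ι] [IsDirectedOrder ι]
    {f : α → ι → ℝ≥0∞} (hf : ∀ a, Monotone (f a)) :
    ∑' a, ⨆ i, f a i = ⨆ i, ∑' a, f a i := by
  simp_rw [ENNReal.tsum_eq_iSup_sum, ENNReal.finsetSum_iSup_of_monotone hf]
  exact iSup_comm

theorem EReal.coe_ennreal_tsum_iSup_le {α ι : Type*} [Preorder ι] [IsDirectedOrder ι]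
    [Nonempty ι] {f : α → ι → ℝ≥0∞} (hf : ∀ a, Monotone (f a)) {y : EReal}
    (h : ∀ i, ((∑' a, f a i : ℝ≥0∞) : EReal) ≤ y) :
    ((∑' a, ⨆ i, f a i : ℝ≥0∞) : EReal) ≤ y := by
  rw [ENNReal.tsum_iSup_of_monotone hf, Monotone.map_ciSup_of_continuousAt
    continuous_coe_ennreal_ereal.continuousAt EReal.coe_ennreal_strictMono.monotone]
  exact iSup_le h

theorem EReal.coe_tsum_of_nonneg {α : Type*} {f : α → ℝ} (hf : Summable f)
    (h0 : ∀ a, 0 ≤ f a) :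
    ((∑' a, f a : ℝ) : EReal) = ((∑' a, ENNReal.ofReal (f a) : ℝ≥0∞) : EReal) := by
  rw [← ENNReal.ofReal_tsum_of_nonneg h0 hf, EReal.coe_ennreal_ofReal,
    max_eq_left (tsum_nonneg h0)]

theorem EReal.coe_tsum_le_coe_ennreal_tsum {α : Type*} {f : α → ℝ} (hf : Summable f)
    {g : α → ℝ≥0∞} (hfg : ∀ a, ENNReal.ofReal (f a) ≤ g a) :
    ((∑' a, f a : ℝ) : EReal) ≤ ((∑' a, g a : ℝ≥0∞) : EReal) := by
  have hpos : Summable fun a => max (f a) 0 :=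
    .of_nonneg_of_le (fun a => le_max_right _ _)
      (fun a => max_le (le_abs_self _) (abs_nonneg _)) hf.abs
  calc ((∑' a, f a : ℝ) : EReal) ≤ ((∑' a, max (f a) 0 : ℝ) : EReal) :=
        EReal.coe_le_coe_iff.2 (hf.tsum_le_tsum (fun a => le_max_left _ _) hpos)
    _ = ((∑' a, ENNReal.ofReal (f a) : ℝ≥0∞) : EReal) := by
        simp [EReal.coe_tsum_of_nonneg hpos fun a => le_max_right _ _]
    _ ≤ ((∑' a, g a : ℝ≥0∞) : EReal) :=
        EReal.coe_ennreal_le_coe_ennreal_iff.2 (ENNReal.tsum_le_tsum hfg)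

noncomputable def weightedNegLog (q : ℝ) (p : ℝ≥0∞) : ℝ≥0∞ :=
  if p = 0 ∧ q ≠ 0 then ⊤ else ENNReal.ofReal (q * -Real.log p.toReal)

section weightedNegLog

variable {q : ℝ} {p : ℝ≥0∞}

theorem weightedNegLog_of_ne_zero (hp : p ≠ 0) :
    weightedNegLog q p = ENNReal.ofReal (q * -Real.log p.toReal) := by
  simp [weightedNegLog, hp]

theorem weightedNegLog_antitone (hq : 0 ≤ q) : Antitone (weightedNegLog q) := by
  intro p p' hpp'
  rcases eq_or_ne p 0 with rfl | hp
  · rcases eq_or_ne q 0 with rfl | hq0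
    · simp [weightedNegLog]
    · simp [weightedNegLog, hq0]
  rw [weightedNegLog_of_ne_zero hp, weightedNegLog_of_ne_zero (ne_bot_of_le_ne_bot hp hpp')]
  rcases eq_or_ne p' ⊤ with rfl | hp'
  · simp
  refine ENNReal.ofReal_le_ofReal (mul_le_mul_of_nonneg_left (neg_le_neg ?_) hq)
  exact Real.log_le_log (ENNReal.toReal_pos hp (ne_top_of_le_ne_top hp' hpp'))
    (ENNReal.toReal_mono hp' hpp')

theorem tendsto_weightedNegLog {ι : Type*} {l : Filter ι} {u : ι → ℝ≥0∞} (hq : 0 ≤ q)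
    (hu : Tendsto u l (𝓝 p)) (hp : p ≠ ⊤) (hu0 : ∀ᶠ i in l, u i ≠ 0) :
    Tendsto (fun i => weightedNegLog q (u i)) l (𝓝 (weightedNegLog q p)) := by
  have hreal : Tendsto (fun i => (u i).toReal) l (𝓝 p.toReal) :=
    (ENNReal.tendsto_toReal hp).comp hu
  refine (tendsto_congr' (hu0.mono fun i hi => (weightedNegLog_of_ne_zero hi).symm)).1 ?_
  rcases eq_or_ne p 0 with rfl | hp0
  · rcases eq_or_lt_of_le hq with rfl | hq0
    · simpa [weightedNegLog] using tendsto_const_nhds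
    have hpos : Tendsto (fun i => (u i).toReal) l (𝓝[>] 0) := by
      refine tendsto_nhdsWithin_of_tendsto_nhds_of_eventually_within _ (by simpa using hreal) ?_
      filter_upwards [hu0, hu.eventually (eventually_lt_nhds ENNReal.zero_lt_top)] with i h0 htop
      exact ENNReal.toReal_pos h0 htop.ne
    rw [weightedNegLog, if_pos ⟨rfl, hq0.ne'⟩]
    exact ENNReal.tendsto_ofReal_atTop.comp <| (tendsto_neg_atBot_atTop.comp
      (Real.tendsto_log_nhdsGT_zero.comp hpos)).const_mul_atTop hq0
  · rw [weightedNegLog_of_ne_zero hp0]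
    refine (ENNReal.continuous_ofReal.tendsto _).comp ((Tendsto.neg ?_).const_mul q)
    exact (Real.continuousAt_log (ENNReal.toReal_pos hp0 hp).ne').tendsto.comp hreal

end weightedNegLog

theorem measure_Iio_sSup_null {μ : Measure ℝ} (h : μ (Ioi 0)ᶜ = 0) :
    μ (Iio (sSup {c : ℝ | 0 ≤ c ∧ μ (Ioo 0 c) = 0})) = 0 := by
  set S := {c : ℝ | 0 ≤ c ∧ μ (Ioo 0 c) = 0}
  have h0S : (0 : ℝ) ∈ S := ⟨le_rfl, by simp⟩
  have hsub : Iio (sSup S) ⊆ (Ioi 0)ᶜ ∪ ⋃ (q : ℚ) (_ : (q : ℝ) ∈ S), Ioo 0 (q : ℝ) := by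
    intro y hy
    by_cases hy0 : 0 < y
    · obtain ⟨c, hcS, hyc⟩ := exists_lt_of_lt_csSup ⟨0, h0S⟩ hy
      obtain ⟨q, hyq, hqc⟩ := exists_rat_btwn hyc
      refine Or.inr (mem_biUnion (x := q) ⟨hy0.le.trans hyq.le, ?_⟩ ⟨hy0, hyq⟩)
      exact measure_mono_null (Ioo_subset_Ioo_right hqc.le) hcS.2
    · exact Or.inl hy0
  refine measure_mono_null hsub (measure_union_null h ?_)
  exact measure_iUnion_null fun q => measure_iUnion_null fun hq => hq.2

noncomputable def shiftedMGF (μ : Measure ℝ) (m l : ℝ) : ℝ≥0∞ :=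
  ∫⁻ s, ENNReal.ofReal (Real.exp (l * (s - m))) ∂μ

theorem lintegral_exp_mul_eq (μ : Measure ℝ) (m l : ℝ) :
    ∫⁻ s, ENNReal.ofReal (Real.exp (l * s)) ∂μ =
      ENNReal.ofReal (Real.exp (l * m)) * shiftedMGF μ m l := by
  rw [shiftedMGF, ← lintegral_const_mul _ (by fun_prop)]
  refine lintegral_congr fun s => ?_
  rw [← ENNReal.ofReal_mul (Real.exp_nonneg _), ← Real.exp_add]
  ring_nf

theorem shiftedMGF_zero (μ : Measure ℝ) (m : ℝ) : shiftedMGF μ m 0 = μ univ := by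
  simp [shiftedMGF]

section shiftedMGF

variable {μ : Measure ℝ} {m : ℝ}

theorem shiftedMGF_ne_zero [NeZero μ] (l : ℝ) : shiftedMGF μ m l ≠ 0 := by
  refine ((lintegral_pos_iff_support (by fun_prop)).2 ?_).ne'
  simp [Function.support, Real.exp_pos, NeZero.ne]

theorem measure_singleton_le_shiftedMGF (l : ℝ) : μ {m} ≤ shiftedMGF μ m l := by
  calc μ {m} = ∫⁻ s in {m}, ENNReal.ofReal (Real.exp (l * (s - m))) ∂μ := by simp
    _ ≤ shiftedMGF μ m l := setLIntegral_le_lintegral _ _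

theorem shiftedMGF_monotone (hm : μ (Iio m) = 0) : Monotone (shiftedMGF μ m) := by
  intro l l' hll'
  refine lintegral_mono_ae ((measure_eq_zero_iff_ae_notMem.1 hm).mono fun s hs => ?_)
  gcongr
  linarith [notMem_Iio.1 hs]

theorem tendsto_shiftedMGF_atBot [IsFiniteMeasure μ] (hm : μ (Iio m) = 0) :
    Tendsto (shiftedMGF μ m) atBot (𝓝 (μ {m})) := by
  have hm' : ∀ᵐ s ∂μ, m ≤ s :=
    (measure_eq_zero_iff_ae_notMem.1 hm).mono fun s => notMem_Iio.1
  rw [← lintegral_indicator_one (measurableSet_singleton m)]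
  refine tendsto_lintegral_filter_of_dominated_convergence 1
    (.of_forall fun l => by fun_prop) ?_ (by simp) (hm'.mono fun s hs => ?_)
  · filter_upwards [eventually_le_atBot 0] with l hl
    filter_upwards [hm'] with s hs
    simp [mul_nonpos_of_nonpos_of_nonneg hl (sub_nonneg.2 hs)]
  rcases hs.eq_or_lt with rfl | hms
  · simp
  rw [indicator_of_notMem (show s ∉ ({m} : Set ℝ) from hms.ne'), ← ENNReal.ofReal_zero]
  exact (ENNReal.continuous_ofReal.tendsto 0).comp
    (Real.tendsto_exp_atBot.comp (tendsto_id.atBot_mul_const (sub_pos.2 hms)))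

theorem monotone_weightedNegLog_shiftedMGF_neg {q : ℝ} (hq : 0 ≤ q) (hm : μ (Iio m) = 0) :
    Monotone fun n : ℕ => weightedNegLog q (shiftedMGF μ m (-n)) :=
  (weightedNegLog_antitone hq).comp <|
    (shiftedMGF_monotone hm).comp_antitone (f := fun n : ℕ => -(n : ℝ))
      fun _ _ h => neg_le_neg (Nat.cast_le.2 h)

theorem iSup_weightedNegLog_shiftedMGF_neg [IsFiniteMeasure μ] [NeZero μ] {q : ℝ} (hq : 0 ≤ q)
    (hm : μ (Iio m) = 0) :
    ⨆ n : ℕ, weightedNegLog q (shiftedMGF μ m (-n)) = weightedNegLog q (μ {m}) :=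
  iSup_eq_of_tendsto (monotone_weightedNegLog_shiftedMGF_neg hq hm) <|
    tendsto_weightedNegLog hq
      ((tendsto_shiftedMGF_atBot hm).comp
        (tendsto_neg_atTop_atBot.comp tendsto_natCast_atTop_atTop))
      (measure_ne_top _ _) (.of_forall fun _ => shiftedMGF_ne_zero _)

end shiftedMGF

section ProbabilityMeasure

variable {μ : Measure ℝ} [IsProbabilityMeasure μ] {m l : ℝ}

theorem shiftedMGF_le_one (hm : μ (Iio m) = 0) (hl : l ≤ 0) : shiftedMGF μ m l ≤ 1 :=
  (shiftedMGF_monotone hm hl).trans_eq (by simp [shiftedMGF_zero])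

theorem lintegral_exp_mul_ne_top (hm : μ (Iio m) = 0) (hl : l ≤ 0) :
    ∫⁻ s, ENNReal.ofReal (Real.exp (l * s)) ∂μ ≠ ⊤ := by
  rw [lintegral_exp_mul_eq μ m]
  exact ENNReal.mul_ne_top ENNReal.ofReal_ne_top
    (ne_top_of_le_ne_top ENNReal.one_ne_top (shiftedMGF_le_one hm hl))

theorem mul_sub_log_lintegral_exp_eq (hm : μ (Iio m) = 0) (hl : l ≤ 0) :
    m * l - Real.log (∫⁻ s, ENNReal.ofReal (Real.exp (l * s)) ∂μ).toReal =
      -Real.log (shiftedMGF μ m l).toReal := by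
  have hJ : (shiftedMGF μ m l).toReal ≠ 0 := ENNReal.toReal_ne_zero.2
    ⟨shiftedMGF_ne_zero l, ne_top_of_le_ne_top ENNReal.one_ne_top (shiftedMGF_le_one hm hl)⟩
  rw [lintegral_exp_mul_eq μ m, ENNReal.toReal_mul, ENNReal.toReal_ofReal (Real.exp_nonneg _),
    Real.log_mul (Real.exp_ne_zero _) hJ, Real.log_exp]
  ring

theorem mul_sub_log_lintegral_exp_nonneg (hm : μ (Iio m) = 0) (hl : l ≤ 0) :
    0 ≤ m * l - Real.log (∫⁻ s, ENNReal.ofReal (Real.exp (l * s)) ∂μ).toReal := by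
  rw [mul_sub_log_lintegral_exp_eq hm hl]
  exact neg_nonneg.2 <| Real.log_nonpos ENNReal.toReal_nonneg <|
    ENNReal.toReal_le_of_le_ofReal zero_le_one (by simpa using shiftedMGF_le_one hm hl)

end ProbabilityMeasure

theorem ofReal_mul_sub_log_lintegral_exp_le {μ : Measure ℝ} [IsFiniteMeasure μ] {m q l : ℝ}
    (hq : 0 ≤ q) (hfin : ∫⁻ s, ENNReal.ofReal (Real.exp (l * s)) ∂μ ≠ ⊤) :
    ENNReal.ofReal (q * (m * l - Real.log (∫⁻ s, ENNReal.ofReal (Real.exp (l * s)) ∂μ).toReal))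
      ≤ weightedNegLog q (μ {m}) := by
  by_cases htop : μ {m} = 0 ∧ q ≠ 0
  · rw [weightedNegLog, if_pos htop]
    exact le_top
  rw [weightedNegLog, if_neg htop]
  rcases eq_or_ne q 0 with rfl | hq0
  · simp
  have hp : 0 < (μ {m}).toReal :=
    ENNReal.toReal_pos (fun h => htop ⟨h, hq0⟩) (measure_ne_top _ _)
  have hle : ENNReal.ofReal (Real.exp (l * m)) * μ {m} ≤
      ∫⁻ s, ENNReal.ofReal (Real.exp (l * s)) ∂μ := by
    rw [lintegral_exp_mul_eq μ m]
    gcongr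
    exact measure_singleton_le_shiftedMGF l
  have hlog := ENNReal.toReal_mono hfin hle
  rw [ENNReal.toReal_mul, ENNReal.toReal_ofReal (Real.exp_nonneg _)] at hlog
  replace hlog := Real.log_le_log (mul_pos (Real.exp_pos _) hp) hlog
  rw [Real.log_mul (Real.exp_ne_zero _) hp.ne', Real.log_exp] at hlog
  gcongr
  linarith

theorem stmt_17_general {V : Type*} [Countable V]
    (ψx : V → Measure ℝ) (hprob : ∀ x, IsProbabilityMeasure (ψx x))
    (hψx : ∀ x, (ψx x) (Set.Ioi 0)ᶜ = 0)
    (Θx : V → ℝ → ℝ≥0∞)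
    (hΘx : ∀ x l, Θx x l = ∫⁻ s, ENNReal.ofReal (Real.exp (l * s)) ∂(ψx x))
    (Qx : V → ℝ) (hQnonneg : ∀ x, 0 ≤ Qx x)
    (GQr : ℝ → ℝ)
    (hGQr : ∀ l : ℝ, GQr l = ∑' x : V, Qx x * Real.log ((Θx x l).toReal))
    (hGQrsum : ∀ l : ℝ, (∀ x, Θx x l ≠ ⊤) →
      Summable fun x => Qx x * Real.log ((Θx x l).toReal))
    (Gstar : ℝ → EReal)
    (hGstar : ∀ a : ℝ, Gstar a = ⨆ l : ℝ,
      if ∀ x, Θx x l ≠ ⊤ then (((a * l - GQr l : ℝ)) : EReal) else (⊥ : EReal))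
    (mx : V → ℝ)
    (hmx : ∀ x, mx x = sSup {c : ℝ | 0 ≤ c ∧ (ψx x) (Set.Ioo 0 c) = 0})
    (hmQsum : Summable fun x => Qx x * mx x)
    (a : ℝ) (haeq : a = ∑' x, Qx x * mx x) :
    Gstar a = ((∑' x : V,
      if (ψx x) {mx x} = 0 ∧ Qx x ≠ 0 then (⊤ : ℝ≥0∞)
      else ENNReal.ofReal (Qx x * (-Real.log (((ψx x) {mx x}).toReal))) : ℝ≥0∞) :
        EReal) := by
  simp only [hΘx] at hGQr hGQrsum hGstar
  have hm x : ψx x (Iio (mx x)) = 0 := hmx x ▸ measure_Iio_sSup_null (hψx x)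
  have hL l (hl : ∀ x, ∫⁻ s, ENNReal.ofReal (Real.exp (l * s)) ∂ψx x ≠ ⊤) :
      HasSum (fun x => Qx x *
          (mx x * l - Real.log (∫⁻ s, ENNReal.ofReal (Real.exp (l * s)) ∂ψx x).toReal))
        (a * l - GQr l) := by
    rw [hGQr, haeq, ← tsum_mul_right]
    exact ((hmQsum.mul_right l).hasSum.sub (hGQrsum l hl).hasSum).congr_fun fun x => by ring
  have hfin (n : ℕ) x : ∫⁻ s, ENNReal.ofReal (Real.exp (-n * s)) ∂ψx x ≠ ⊤ :=
    lintegral_exp_mul_ne_top (hm x) (by simp)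
  have hseries (n : ℕ) :
      ((∑' x, weightedNegLog (Qx x) (shiftedMGF (ψx x) (mx x) (-n)) : ℝ≥0∞) : EReal) =
        ((a * -n - GQr (-n) : ℝ) : EReal) := by
    have hn : -(n : ℝ) ≤ 0 := by simp
    rw [← (hL _ (hfin n)).tsum_eq, EReal.coe_tsum_of_nonneg (hL _ (hfin n)).summable fun x =>
      mul_nonneg (hQnonneg x) (mul_sub_log_lintegral_exp_nonneg (hm x) hn)]
    refine congrArg _ (tsum_congr fun x => ?_)
    rw [mul_sub_log_lintegral_exp_eq (hm x) hn, weightedNegLog_of_ne_zero (shiftedMGF_ne_zero _)]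
  change Gstar a = ((∑' x, weightedNegLog (Qx x) (ψx x {mx x}) : ℝ≥0∞) : EReal)
  rw [hGstar]
  refine le_antisymm (iSup_le fun l => ?_) ?_
  · split_ifs with hl
    · rw [← (hL l hl).tsum_eq]
      exact EReal.coe_tsum_le_coe_ennreal_tsum (hL l hl).summable fun x =>
        ofReal_mul_sub_log_lintegral_exp_le (hQnonneg x) (hl x)
    · exact bot_le
  rw [tsum_congr fun x => (iSup_weightedNegLog_shiftedMGF_neg (hQnonneg x) (hm x)).symm]
  refine EReal.coe_ennreal_tsum_iSup_le
    (fun x => monotone_weightedNegLog_shiftedMGF_neg (hQnonneg x) (hm x)) fun n => ?_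
  exact (hseries n).trans_le <| le_iSup_of_le (-n : ℝ) (by rw [if_pos (hfin n)])

/-- Let `a > 0`, `Q ≥ 0` summable with some `Q_x > 0`, and
`ψ_x ∈ P(0,∞)` with `G_Q(λ) = Σ_x Q_x log ∫ e^{λ s} ψ_x(ds)` satisfying
`G_Q(ζ_Q) = ∞`.  If `a = m_Q := Σ_x Q_x m_x` (with `m_x` the essential infimum of
`ψ_x`), then the Fenchel–Legendre transform `G_Q*(a) = sup_λ (aλ − G_Q(λ))` equals
`−Σ_x Q_x log ψ_x({m_x})`, a term being `+∞` when `Q_x > 0` and `ψ_x({m_x}) = 0`. -/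
theorem stmt_17 {V : Type*} [Countable V]
    (ψx : V → Measure ℝ) (hprob : ∀ x, IsProbabilityMeasure (ψx x))
    (hψx : ∀ x, (ψx x) (Set.Ioi 0)ᶜ = 0)
    (Θx : V → ℝ → ℝ≥0∞)
    (hΘx : ∀ x l, Θx x l = ∫⁻ s, ENNReal.ofReal (Real.exp (l * s)) ∂(ψx x))
    (Qx : V → ℝ) (hQnonneg : ∀ x, 0 ≤ Qx x) (hQsum : Summable Qx)
    (hVplus : ∃ x, 0 < Qx x)
    (GQ : ℝ → ℝ≥0∞)
    (hGQ : ∀ l : ℝ, GQ l = ∑' x : V,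
      if Qx x ≠ 0 ∧ Θx x l = ⊤ then (⊤ : ℝ≥0∞)
      else ENNReal.ofReal (Qx x * Real.log ((Θx x l).toReal)))
    (GQr : ℝ → ℝ)
    (hGQr : ∀ l : ℝ, GQr l = ∑' x : V, Qx x * Real.log ((Θx x l).toReal))
    (hGQrsum : ∀ l : ℝ, (∀ x, Θx x l ≠ ⊤) →
      Summable fun x => Qx x * Real.log ((Θx x l).toReal))
    (ζQ : EReal)
    (hζQ : ζQ = sSup {l : EReal | ∃ r : ℝ, l = (r : EReal) ∧ 0 ≤ r ∧ GQ r ≠ ⊤})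
    (hblow : (⨆ (l : ℝ) (_ : (l : EReal) ≤ ζQ), GQ l) = ⊤)
    (Gstar : ℝ → EReal)
    (hGstar : ∀ a : ℝ, Gstar a = ⨆ l : ℝ,
      if ∀ x, Θx x l ≠ ⊤ then (((a * l - GQr l : ℝ)) : EReal) else (⊥ : EReal))
    (mx : V → ℝ)
    (hmx : ∀ x, mx x = sSup {c : ℝ | 0 ≤ c ∧ (ψx x) (Set.Ioo 0 c) = 0})
    (hmQsum : Summable fun x => Qx x * mx x)
    (a : ℝ) (ha : 0 < a) (haeq : a = ∑' x, Qx x * mx x) :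
    Gstar a = ((∑' x : V,
      if (ψx x) {mx x} = 0 ∧ Qx x ≠ 0 then (⊤ : ℝ≥0∞)
      else ENNReal.ofReal (Qx x * (-Real.log (((ψx x) {mx x}).toReal))) : ℝ≥0∞) :
        EReal) :=
  stmt_17_general ψx hprob hψx Θx hΘx Qx hQnonneg GQr hGQr hGQrsum Gstar hGstar mx hmx hmQsum a haeq
end

section
/- Let p_x ∈ (0,1) be birth probabilities of a birth–death chain on ℕ with p = limsup_{x→∞} p_x < 1/2, q_x = 1 − p_x, and p′_x = sup_{k≥x} p_k, q′_x = 1 − p′_x. Define u(0) = u(1) = 1 and u(x) = (∏_{k=1}^{x−1} q′_k/p′_k)^{1/2} for x ≥ 2. Then for all x large enough that q′_{x−1} ≥ 1/2, the ratio û(x) = u(x)/(p_x u(x+1) + q_x u(x−1)) satisfies û(x) ≥ 1/(3 (p′_{x−1})^{1/2}). -/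
open Filter

/-- Let `p_x ∈ (0,1)` be the birth probabilities of a birth–death
chain on `ℕ` with `limsup_{x→∞} p_x < 1/2`, `q_x = 1 − p_x`, `p′_x = sup_{k ≥ x} p_k`,
`q′_x = 1 − p′_x`.  With `u 0 = u 1 = 1` and `u x = (∏_{k=1}^{x−1} q′_k/p′_k)^{1/2}`
for `x ≥ 2`, every `x ≥ 2` with `q′_{x−1} ≥ 1/2` satisfies
`û x = u x / (p_x u(x+1) + q_x u(x−1)) ≥ 1 / (3 √(p′_{x−1}))`. -/
theorem stmt_19 (p : ℕ → ℝ) (hp : ∀ x, 0 < p x ∧ p x < 1)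
    (hlim : limsup p atTop < 1 / 2)
    (q p' q' : ℕ → ℝ)
    (hq : ∀ x, q x = 1 - p x)
    (hp' : ∀ x, p' x = sSup {r : ℝ | ∃ k, x ≤ k ∧ r = p k})
    (hq' : ∀ x, q' x = 1 - p' x)
    (u : ℕ → ℝ)
    (hu0 : u 0 = 1) (hu1 : u 1 = 1)
    (hu : ∀ x, 2 ≤ x → u x = Real.sqrt (∏ k ∈ Finset.Ico 1 x, q' k / p' k)) :
    ∀ x, 2 ≤ x → 1 / 2 ≤ q' (x - 1) →
      1 / (3 * Real.sqrt (p' (x - 1))) ≤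
        u x / (p x * u (x + 1) + q x * u (x - 1)) := by
  -- basic facts about p'
  have hmem : ∀ x : ℕ, p x ∈ {r : ℝ | ∃ k, x ≤ k ∧ r = p k} := fun x => ⟨x, le_rfl, rfl⟩
  have hbdd : ∀ x : ℕ, BddAbove {r : ℝ | ∃ k, x ≤ k ∧ r = p k} := by
    intro x
    refine ⟨1, ?_⟩
    rintro r ⟨k, -, rfl⟩
    exact (hp k).2.le
  have hple : ∀ x, p x ≤ p' x := by
    intro x; rw [hp' x]; exact le_csSup (hbdd x) (hmem x)
  have hp'pos : ∀ x, 0 < p' x := fun x => lt_of_lt_of_le (hp x).1 (hple x)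
  have hanti : ∀ x y : ℕ, x ≤ y → p' y ≤ p' x := by
    intro x y hxy
    rw [hp' x, hp' y]
    refine csSup_le_csSup (hbdd x) ⟨p y, hmem y⟩ ?_
    rintro r ⟨k, hk, rfl⟩
    exact ⟨k, hxy.trans hk, rfl⟩
  -- eventually p < 1/2, hence p' < 1 everywhere
  have hev : ∀ᶠ k in atTop, p k < 1 / 2 :=
    eventually_lt_of_limsup_lt hlim (isBoundedUnder_of ⟨1, fun x => (hp x).2.le⟩)
  obtain ⟨N, hN⟩ := eventually_atTop.1 hev
  have hp'lt1 : ∀ x, p' x < 1 := by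
    intro x
    rw [hp' x]
    have hne : (Finset.Icc x (max x N)).Nonempty := ⟨x, by simp⟩
    set m := (Finset.Icc x (max x N)).sup' hne p with hm
    have hm1 : m < 1 := (Finset.sup'_lt_iff hne).2 fun k _ => (hp k).2
    have hbnd : ∀ r ∈ {r : ℝ | ∃ k, x ≤ k ∧ r = p k}, r ≤ max m (1 / 2) := by
      rintro r ⟨k, hk, rfl⟩
      by_cases h : k ≤ max x N
      · exact le_trans (Finset.le_sup' p (Finset.mem_Icc.2 ⟨hk, h⟩)) (le_max_left _ _)
      · have : N ≤ k := by omega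
        exact le_trans (hN k this).le (le_max_right _ _)
    exact lt_of_le_of_lt (csSup_le ⟨p x, hmem x⟩ hbnd) (max_lt hm1 (by norm_num))
  have hq'pos : ∀ x, 0 < q' x := by
    intro x; rw [hq' x]; linarith [hp'lt1 x]
  have hq'le1 : ∀ x, q' x ≤ 1 := by
    intro x; rw [hq' x]; linarith [hp'pos x]
  have hrpos : ∀ k, 0 < q' k / p' k := fun k => div_pos (hq'pos k) (hp'pos k)
  -- uniform formula for u on x ≥ 1
  have hu' : ∀ y, 1 ≤ y → u y = Real.sqrt (∏ k ∈ Finset.Ico 1 y, q' k / p' k) := by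
    intro y hy
    rcases eq_or_lt_of_le hy with h | h
    · rw [← h]; simp [hu1]
    · exact hu y h
  intro x hx hhalf
  obtain ⟨a, rfl⟩ : ∃ a, x = a + 2 := ⟨x - 2, by omega⟩
  simp only [show a + 2 - 1 = a + 1 from rfl] at hhalf ⊢
  -- notation
  set P := ∏ k ∈ Finset.Ico 1 (a + 2), q' k / p' k with hP
  have hPpos : 0 < P := Finset.prod_pos fun k _ => hrpos k
  have hQpos : 0 < ∏ k ∈ Finset.Ico 1 (a + 1), q' k / p' k :=
    Finset.prod_pos fun k _ => hrpos k
  have hux : u (a + 2) = Real.sqrt P := hu' _ (by omega)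
  have hsplit1 : ∏ k ∈ Finset.Ico 1 (a + 3), q' k / p' k = P * (q' (a + 2) / p' (a + 2)) :=
    Finset.prod_Ico_succ_top (by omega) _
  have hsplit2 : P = (∏ k ∈ Finset.Ico 1 (a + 1), q' k / p' k) * (q' (a + 1) / p' (a + 1)) :=
    Finset.prod_Ico_succ_top (by omega) _
  have hux1 : u (a + 2 + 1) = Real.sqrt P * Real.sqrt (q' (a + 2) / p' (a + 2)) := by
    rw [hu' _ (by omega), hsplit1, Real.sqrt_mul hPpos.le]
  have hrs : Real.sqrt (q' (a + 1) / p' (a + 1)) ≠ 0 := (Real.sqrt_pos.2 (hrpos _)).ne'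
  have huxm : u (a + 1) = Real.sqrt P / Real.sqrt (q' (a + 1) / p' (a + 1)) := by
    rw [hu' _ (by omega), eq_div_iff hrs, ← Real.sqrt_mul hQpos.le, ← hsplit2]
  have hsP : 0 < Real.sqrt P := Real.sqrt_pos.2 hPpos
  have hqpos : 0 < q (a + 2) := by rw [hq]; linarith [(hp (a + 2)).2]
  have hsp' : 0 < Real.sqrt (p' (a + 1)) := Real.sqrt_pos.2 (hp'pos (a + 1))
  -- the key bound on the bracket
  have hT1 : p (a + 2) * Real.sqrt (q' (a + 2) / p' (a + 2)) ≤ Real.sqrt (p' (a + 1)) := by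
    have h1 : Real.sqrt (q' (a + 2) / p' (a + 2)) ≤ Real.sqrt (1 / p' (a + 2)) :=
      Real.sqrt_le_sqrt ((div_le_div_iff_of_pos_right (hp'pos _)).2 (hq'le1 _))
    have h2 : p (a + 2) * Real.sqrt (1 / p' (a + 2)) ≤ Real.sqrt (p' (a + 2)) := by
      rw [one_div, Real.sqrt_inv, ← div_eq_mul_inv,
        div_le_iff₀ (Real.sqrt_pos.2 (hp'pos (a + 2)))]
      exact (hple _).trans_eq (Real.mul_self_sqrt (hp'pos (a + 2)).le).symm
    calc p (a + 2) * Real.sqrt (q' (a + 2) / p' (a + 2))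
        ≤ p (a + 2) * Real.sqrt (1 / p' (a + 2)) :=
          mul_le_mul_of_nonneg_left h1 (hp (a + 2)).1.le
      _ ≤ Real.sqrt (p' (a + 2)) := h2
      _ ≤ Real.sqrt (p' (a + 1)) := Real.sqrt_le_sqrt (hanti _ _ (by omega))
  have hT2 : q (a + 2) / Real.sqrt (q' (a + 1) / p' (a + 1)) ≤
      2 * Real.sqrt (p' (a + 1)) := by
    have hq1 : q (a + 2) ≤ 1 := by rw [hq]; linarith [(hp (a + 2)).1]
    have hinv : 1 / Real.sqrt (q' (a + 1) / p' (a + 1)) =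
        Real.sqrt (p' (a + 1) / q' (a + 1)) := by
      rw [one_div, ← Real.sqrt_inv, inv_div]
    have hdivle : p' (a + 1) / q' (a + 1) ≤ 2 * p' (a + 1) := by
      rw [div_le_iff₀ (by linarith)]
      nlinarith [hp'pos (a + 1)]
    have h3 : Real.sqrt (p' (a + 1) / q' (a + 1)) ≤ 2 * Real.sqrt (p' (a + 1)) := by
      calc Real.sqrt (p' (a + 1) / q' (a + 1)) ≤ Real.sqrt (2 * p' (a + 1)) :=
            Real.sqrt_le_sqrt hdivle
        _ = Real.sqrt 2 * Real.sqrt (p' (a + 1)) := Real.sqrt_mul (by norm_num) _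
        _ ≤ 2 * Real.sqrt (p' (a + 1)) := by
            apply mul_le_mul_of_nonneg_right _ hsp'.le
            nlinarith [Real.sq_sqrt (show (0:ℝ) ≤ 2 by norm_num), Real.sqrt_nonneg 2]
    calc q (a + 2) / Real.sqrt (q' (a + 1) / p' (a + 1))
        ≤ 1 / Real.sqrt (q' (a + 1) / p' (a + 1)) :=
          (div_le_div_iff_of_pos_right (Real.sqrt_pos.2 (hrpos (a + 1)))).2 hq1
      _ = Real.sqrt (p' (a + 1) / q' (a + 1)) := hinv
      _ ≤ 2 * Real.sqrt (p' (a + 1)) := h3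
  -- denominator
  have hD : p (a + 2) * u (a + 2 + 1) + q (a + 2) * u (a + 1) =
      Real.sqrt P * (p (a + 2) * Real.sqrt (q' (a + 2) / p' (a + 2)) +
        q (a + 2) / Real.sqrt (q' (a + 1) / p' (a + 1))) := by
    rw [hux1, huxm]; ring
  have hDpos : 0 < p (a + 2) * u (a + 2 + 1) + q (a + 2) * u (a + 1) := by
    rw [hD]
    apply mul_pos hsP
    have h1 : 0 < p (a + 2) * Real.sqrt (q' (a + 2) / p' (a + 2)) :=
      mul_pos (hp _).1 (Real.sqrt_pos.2 (hrpos _))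
    have h2 : 0 < q (a + 2) / Real.sqrt (q' (a + 1) / p' (a + 1)) :=
      div_pos hqpos (Real.sqrt_pos.2 (hrpos _))
    linarith
  rw [div_le_div_iff₀ (by positivity) hDpos, one_mul, hux, hD]
  calc Real.sqrt P * (p (a + 2) * Real.sqrt (q' (a + 2) / p' (a + 2)) +
        q (a + 2) / Real.sqrt (q' (a + 1) / p' (a + 1)))
      ≤ Real.sqrt P * (3 * Real.sqrt (p' (a + 1))) := by
        apply mul_le_mul_of_nonneg_left _ hsP.le
        linarith
    _ = Real.sqrt P * (3 * Real.sqrt (p' (a + 1))) := rfl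
end
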